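/- The convex hull of D'_k (the set of k-sparse traffic matrices) equals D_k: conv(D'_k) = D_k. -/

import Mathlib

/-- Node set of the `N × N` torus: `Z_N × Z_N` with coordinatewise addition mod `N`. -/
abbrev Vt (N : ℕ) := ZMod N × ZMod N

/-- The four link directions `{e1, e2, -e1, -e2}`. -/
def dirs (N : ℕ) : Finset (Vt N) :=
  {((1 : ZMod N), (0 : ZMod N)), (0, 1), (-1, 0), (0, -1)}

/-- Edge set of the directed torus graph: `(i, i+e)` for `i ∈ V`, `e ∈ A`. -/
def Edges (N : ℕ) : Set (Vt N × Vt N) := {p | ∃ e ∈ dirs N, p.2 = p.1 + e}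

/-- Index set of nonzero displacements `t ∈ V \ {0}`. -/
def tns (N : ℕ) [NeZero N] : Finset (Vt N) := Finset.univ.filter (· ≠ 0)

/-- Row (source) sum of a traffic matrix: `Σ_{t ≠ 0} d_{s,s+t}`. -/
def rowSum (N : ℕ) [NeZero N] (d : Vt N → Vt N → ℝ) (s : Vt N) : ℝ :=
  ∑ t ∈ tns N, d s t

/-- Column (sink) sum of a traffic matrix at node `s`: `Σ_{t ≠ 0} d_{s-t,s}`. -/
def colSum (N : ℕ) [NeZero N] (d : Vt N → Vt N → ℝ) (s : Vt N) : ℝ :=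
  ∑ t ∈ tns N, d (s - t) t

/-- Total traffic `Σ_{s,t} d_{s,s+t}`. -/
def totalSum (N : ℕ) [NeZero N] (d : Vt N → Vt N → ℝ) : ℝ :=
  ∑ s : Vt N, rowSum N d s

/-- `d` is a valid (hose-feasible) traffic matrix. -/
def IsTraffic (N : ℕ) [NeZero N] (d : Vt N → Vt N → ℝ) : Prop :=
  (∀ s t, 0 ≤ d s t) ∧ (∀ s, d s 0 = 0) ∧
  (∀ s, rowSum N d s ≤ 1) ∧ (∀ s, colSum N d s ≤ 1)

/-- `d` is `k`-limited: hose-feasible with total traffic at most `k`. -/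
def kLimited (N : ℕ) [NeZero N] (k : ℕ) (d : Vt N → Vt N → ℝ) : Prop :=
  IsTraffic N d ∧ totalSum N d ≤ (k : ℝ)

/-- `d` is `k`-sparse: hose-feasible with at most `k` sources and `k` sinks. -/
def kSparse (N : ℕ) [NeZero N] (k : ℕ) (d : Vt N → Vt N → ℝ) : Prop :=
  IsTraffic N d ∧
  {s : Vt N | ∃ t, t ≠ 0 ∧ d s t ≠ 0}.ncard ≤ k ∧
  {s : Vt N | ∃ t, t ≠ 0 ∧ d (s - t) t ≠ 0}.ncard ≤ k

/-- `f s t i e` is the fraction of traffic of pair `(s, s+t)` routed on link `(i, i+e)`.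
`f` is a valid routing policy: flow conservation and `0 ≤ f ≤ 1`. -/
def IsRouting (N : ℕ) [NeZero N] (f : Vt N → Vt N → Vt N → Vt N → ℝ) : Prop :=
  (∀ s t, t ≠ 0 → ∀ i : Vt N,
    (∑ e ∈ dirs N, f s t i e) - (∑ e ∈ dirs N, f s t (i + e) (-e)) =
      (if i = s then 1 else if i = s + t then -1 else 0)) ∧
  (∀ s t i e, 0 ≤ f s t i e ∧ f s t i e ≤ 1)

/-- Load on link `(i, i+e)` under routing `f` and traffic `d`. -/
def load (N : ℕ) [NeZero N] (f : Vt N → Vt N → Vt N → Vt N → ℝ)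
    (d : Vt N → Vt N → ℝ) (i e : Vt N) : ℝ :=
  ∑ s : Vt N, ∑ t ∈ tns N, d s t * f s t i e

/-- Maximum load on any link. -/
noncomputable def maxLoad (N : ℕ) [NeZero N] (f : Vt N → Vt N → Vt N → Vt N → ℝ)
    (d : Vt N → Vt N → ℝ) : ℝ :=
  sSup {x | ∃ i e, e ∈ dirs N ∧ x = load N f d i e}

/-- Optimal oblivious worst-case load over `k`-limited traffic. -/
noncomputable def thetaStar (N : ℕ) [NeZero N] (k : ℕ) : ℝ :=
  sInf {x | ∃ f, IsRouting N f ∧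
    x = sSup {y | ∃ d, kLimited N k d ∧ y = maxLoad N f d}}

/-!
Read a traffic matrix as a nonnegative source × sink matrix `M` with row and column sums at most
`1` and total mass `t ≤ k`. Pad `M` to a doubly stochastic matrix on `ι ⊕ ι` whose lower-right
block vanishes on every row outside a fixed set `K` of `k` rows, and decompose it by Birkhoff's
theorem. Each permutation in the decomposition sends the `n - k` lower rows outside `K` to upper
columns, so at most `k` upper rows are sent to upper columns: the upper-left blocks of the
permutation matrices are `k`-sparse, and they average to `M`.
-/

open Finset

namespace Matrix

section Birkhoff

variable {R n : Type*} [Field R] [LinearOrder R] [IsStrictOrderedRing R] [Fintype n] [DecidableEq n]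

theorem mem_convexHull_permMatrix_of_ne_zero {M : Matrix n n R} (hM : M ∈ doublyStochastic R n) :
    M ∈ convexHull R {P | ∃ σ : Equiv.Perm n, (∀ i, M i (σ i) ≠ 0) ∧ σ.permMatrix R = P} := by
  obtain ⟨w, hw0, hw1, hwM⟩ := exists_eq_sum_perm_of_mem_doublyStochastic hM
  have hsupp : ∀ σ, 0 < w σ → ∀ i, M i (σ i) ≠ 0 := by
    intro σ hσ i
    refine (hσ.trans_le ?_).ne'
    rw [← hwM, sum_apply]
    calc w σ = (w σ • σ.permMatrix R) i (σ i) := by simp [Equiv.toPEquiv_apply]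
      _ ≤ ∑ τ, (w τ • τ.permMatrix R) i (σ i) := by
        refine single_le_sum (f := fun τ => (w τ • τ.permMatrix R) i (σ i)) (fun τ _ => ?_)
          (mem_univ σ)
        rw [smul_apply, smul_eq_mul]
        exact mul_nonneg (hw0 τ) (nonneg_of_mem_doublyStochastic permMatrix_mem_doublyStochastic)
  set F := univ.filter (fun σ => 0 < w σ)
  have hF : ∀ σ ∉ F, w σ = 0 := fun σ hσ =>
    ((hw0 σ).lt_or_eq.resolve_left (by simpa [F] using hσ)).symm
  rw [← sum_subset (subset_univ F) (fun σ _ hσ => by simp [hF σ hσ])] at hw1 hwM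
  have hMc : F.centerMass w (·.permMatrix R) = M := by rw [centerMass_eq_of_sum_1 _ _ hw1, hwM]
  have hmem : ∀ σ ∈ F,
      σ.permMatrix R ∈ {P | ∃ σ : Equiv.Perm n, (∀ i, M i (σ i) ≠ 0) ∧ σ.permMatrix R = P} :=
    fun σ hσ => ⟨σ, hsupp σ (by simpa [F] using hσ), rfl⟩
  simpa only [hMc] using centerMass_mem_convexHull F (fun σ _ => hw0 σ) (by simp [hw1]) hmem

end Birkhoff

section Substochastic

variable {R ι : Type*} [Field R] [LinearOrder R] [IsStrictOrderedRing R] [Fintype ι]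

def IsSubstochastic (M : Matrix ι ι R) : Prop :=
  (∀ i j, 0 ≤ M i j) ∧ (∀ i, ∑ j, M i j ≤ 1) ∧ ∀ j, ∑ i, M i j ≤ 1

variable (R ι) in
/-- The matrix counterpart of `D'_k`. -/
def sparseSubstochastic (k : ℕ) : Set (Matrix ι ι R) :=
  {P | P.IsSubstochastic ∧ {i | ∃ j, P i j ≠ 0}.ncard ≤ k ∧ {j | ∃ i, P i j ≠ 0}.ncard ≤ k}

theorem isSubstochastic_toBlocks₁₁ {κ : Type*} [Fintype κ] [DecidableEq ι] [DecidableEq κ]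
    {D : Matrix (ι ⊕ κ) (ι ⊕ κ) R} (hD : D ∈ doublyStochastic R (ι ⊕ κ)) :
    D.toBlocks₁₁.IsSubstochastic := by
  refine ⟨fun i j => nonneg_of_mem_doublyStochastic hD, fun i => ?_, fun j => ?_⟩
  · have := sum_row_of_mem_doublyStochastic hD (.inl i)
    rw [Fintype.sum_sum_type] at this
    exact this ▸ le_add_of_nonneg_right (sum_nonneg fun c _ => nonneg_of_mem_doublyStochastic hD)
  · have := sum_col_of_mem_doublyStochastic hD (.inl j)
    rw [Fintype.sum_sum_type] at this
    exact this ▸ le_add_of_nonneg_right (sum_nonneg fun c _ => nonneg_of_mem_doublyStochastic hD)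

/-- The row and column deficits of `M` fill the off-diagonal blocks; `y r` is the mass of the lower
row `r` outside the lower-right block. -/
noncomputable def stochasticPadding (M : Matrix ι ι R) (y : ι → R) : Matrix (ι ⊕ ι) (ι ⊕ ι) R :=
  fromBlocks M (of fun i _ => (1 - ∑ j, M i j) / Fintype.card ι)
    (of fun r j => y r * (1 - ∑ i, M i j) / (Fintype.card ι - ∑ i, ∑ j, M i j))
    (of fun r _ => (1 - y r) / Fintype.card ι)

theorem stochasticPadding_mem_doublyStochastic [DecidableEq ι] {M : Matrix ι ι R} {y : ι → R}
    (hM : M.IsSubstochastic) (hy : ∀ r, 0 ≤ y r ∧ y r ≤ 1)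
    (hy_sum : ∑ r, y r = Fintype.card ι - ∑ i, ∑ j, M i j)
    (htot : ∑ i, ∑ j, M i j < Fintype.card ι) :
    stochasticPadding M y ∈ doublyStochastic R (ι ⊕ ι) := by
  obtain ⟨h0, hrow, hcol⟩ := hM
  have ht : 0 ≤ ∑ i, ∑ j, M i j := sum_nonneg fun i _ => sum_nonneg fun j _ => h0 i j
  have hrow_def : ∑ i, (1 - ∑ j, M i j) = Fintype.card ι - ∑ i, ∑ j, M i j := by
    simp [sum_sub_distrib]
  have hcol_def : ∑ j, (1 - ∑ i, M i j) = Fintype.card ι - ∑ i, ∑ j, M i j := by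
    simp [sum_sub_distrib, sum_comm (γ := ι)]
  rw [mem_doublyStochastic_iff_sum]
  simp only [stochasticPadding, Sum.forall, Fintype.sum_sum_type, fromBlocks_apply₁₁,
    fromBlocks_apply₁₂, fromBlocks_apply₂₁, fromBlocks_apply₂₂, of_apply, sum_const, card_univ,
    nsmul_eq_mul, ← sum_div, ← mul_sum, ← sum_mul, hrow_def, hcol_def, hy_sum]
  set n : R := (Fintype.card ι : R)
  set t := ∑ i, ∑ j, M i j
  have hn : 0 < n := ht.trans_lt htot
  have hnt : 0 < n - t := sub_pos.2 htot
  refine ⟨⟨fun i => ⟨fun j => h0 i j, fun _ => ?_⟩, fun r => ⟨fun j => ?_, fun _ => ?_⟩⟩,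
    ⟨fun i => ?_, fun r => ?_⟩, ⟨fun j => ?_, fun c => ?_⟩⟩
  · exact div_nonneg (sub_nonneg.2 (hrow i)) hn.le
  · exact div_nonneg (mul_nonneg (hy r).1 (sub_nonneg.2 (hcol j))) hnt.le
  · exact div_nonneg (sub_nonneg.2 (hy r).2) hn.le
  · field_simp; ring
  · field_simp; ring
  · field_simp; ring
  · simp only [sum_sub_distrib, hy_sum, sum_const, card_univ, nsmul_eq_mul, mul_one]
    field_simp; ring

end Substochastic

end Matrix

namespace Equiv.Perm

variable {α : Type*} [Finite α] (σ : Perm (α ⊕ α))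

theorem ncard_inl_source_le_ncard_inl_target :
    {i | ∃ j, σ (.inl i) = .inl j}.ncard ≤ {j | ∃ i, σ (.inl i) = .inl j}.ncard := by
  rw [← Set.ncard_image_of_injective {j | ∃ i, σ (.inl i) = .inl j} Sum.inl_injective]
  refine Set.ncard_le_ncard_of_injOn (σ ∘ Sum.inl) ?_ (σ.injective.comp Sum.inl_injective).injOn
  rintro i ⟨j, hj⟩
  exact ⟨j, ⟨i, hj⟩, hj.symm⟩

theorem ncard_inl_target_le {K : Set α} (hK : ∀ r ∉ K, ∃ j, σ (.inr r) = .inl j) :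
    {j | ∃ i, σ (.inl i) = .inl j}.ncard ≤ K.ncard := by
  set B := {j | ∃ i, σ (.inl i) = .inl j}
  have hcompl : Kᶜ.ncard ≤ Bᶜ.ncard := by
    rw [← Set.ncard_image_of_injective Bᶜ Sum.inl_injective]
    refine Set.ncard_le_ncard_of_injOn (σ ∘ Sum.inr) ?_ (σ.injective.comp Sum.inr_injective).injOn
    intro r hr
    obtain ⟨j, hj⟩ := hK r hr
    refine ⟨j, fun ⟨i, hi⟩ => ?_, hj.symm⟩
    exact Sum.inl_ne_inr (σ.injective (hi.trans hj.symm))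
  have := Set.ncard_add_ncard_compl K
  have := Set.ncard_add_ncard_compl B
  omega

end Equiv.Perm

namespace Matrix

theorem isLinearMap_toBlocks₁₁ {R ι κ : Type*} [Semiring R] :
    IsLinearMap R (toBlocks₁₁ : Matrix (ι ⊕ κ) (ι ⊕ κ) R → Matrix ι ι R) :=
  ⟨fun _ _ => rfl, fun _ _ => rfl⟩

theorem toBlocks₁₁_permMatrix_apply {R ι : Type*} [Zero R] [One R] [DecidableEq ι]
    (σ : Equiv.Perm (ι ⊕ ι)) (i j : ι) :
    (σ.permMatrix R).toBlocks₁₁ i j = if σ (.inl i) = .inl j then 1 else 0 := by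
  simp [toBlocks₁₁, Equiv.Perm.permMatrix, PEquiv.toMatrix_apply, Equiv.toPEquiv_apply]

variable {R ι : Type*} [Field R] [LinearOrder R] [IsStrictOrderedRing R] [Fintype ι] [DecidableEq ι]

theorem toBlocks₁₁_permMatrix_mem_sparseSubstochastic {σ : Equiv.Perm (ι ⊕ ι)} {K : Set ι}
    (hK : ∀ r ∉ K, ∃ j, σ (.inr r) = .inl j) :
    (σ.permMatrix R).toBlocks₁₁ ∈ sparseSubstochastic R ι K.ncard := by
  simp only [sparseSubstochastic, Set.mem_ofPred_eq, toBlocks₁₁_permMatrix_apply, ne_eq,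
    ite_eq_right_iff, one_ne_zero, imp_false, not_not]
  exact ⟨isSubstochastic_toBlocks₁₁ permMatrix_mem_doublyStochastic,
    σ.ncard_inl_source_le_ncard_inl_target.trans (σ.ncard_inl_target_le hK),
    σ.ncard_inl_target_le hK⟩

theorem mem_convexHull_sparseSubstochastic {M : Matrix ι ι R} {k : ℕ} (hM : M.IsSubstochastic)
    (htot : ∑ i, ∑ j, M i j ≤ k) : M ∈ convexHull R (sparseSubstochastic R ι k) := by
  classical
  rcases le_or_gt (Fintype.card ι) k with hk | hk
  · refine subset_convexHull R _ ⟨hM, ?_, ?_⟩ <;>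
      exact (Set.ncard_le_card _).trans (Nat.card_eq_fintype_card (α := ι) ▸ hk)
  obtain ⟨K, -, hK⟩ := exists_subset_card_eq (s := (univ : Finset ι)) (by simpa using hk.le)
  set t := ∑ i, ∑ j, M i j
  have ht : 0 ≤ t := sum_nonneg fun i _ => sum_nonneg fun j _ => hM.1 i j
  -- only the `k` lower rows in `K` may carry mass in the lower-right block
  set y : ι → R := fun r => 1 - if r ∈ K then t / k else 0
  have hy : ∀ r, 0 ≤ y r ∧ y r ≤ 1 := by
    intro r
    by_cases hr : r ∈ K <;> simp [y, hr, div_le_one_of_le₀ htot, div_nonneg ht]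
  have hy_sum : ∑ r, y r = Fintype.card ι - t := by
    simp only [y, sum_sub_distrib, sum_ite_mem, univ_inter, sum_const, card_univ, hK,
      nsmul_eq_mul, mul_one]
    rw [mul_div_cancel_of_imp' fun hk0 => le_antisymm (hk0 ▸ htot) ht]
  have hD := stochasticPadding_mem_doublyStochastic hM hy hy_sum
    (htot.trans_lt (by exact_mod_cast hk))
  have hsupp : ∀ σ : Equiv.Perm (ι ⊕ ι), (∀ p, stochasticPadding M y p (σ p) ≠ 0) →
      ∀ r ∉ K, ∃ j, σ (.inr r) = .inl j := by
    intro σ hσ r hr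
    rcases h : σ (.inr r) with j | c
    · exact ⟨j, rfl⟩
    · simpa [h, stochasticPadding, y, hr] using hσ (.inr r)
  have hmem := Set.mem_image_of_mem toBlocks₁₁ (mem_convexHull_permMatrix_of_ne_zero hD)
  rw [isLinearMap_toBlocks₁₁.image_convexHull, stochasticPadding, toBlocks_fromBlocks₁₁] at hmem
  refine convexHull_mono ?_ hmem
  rintro _ ⟨_, ⟨σ, hσ, rfl⟩, rfl⟩
  simpa [hK] using toBlocks₁₁_permMatrix_mem_sparseSubstochastic (R := R) (K := (K : Set ι))
    fun r hr => hsupp σ hσ r hr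

end Matrix

section Torus

variable {N : ℕ}

/-- Reindexes `d` from (source, displacement) to (source, sink). -/
def trafficMatrix (d : Vt N → Vt N → ℝ) : Matrix (Vt N) (Vt N) ℝ :=
  Matrix.of fun i j => d i (j - i)

def ofTrafficMatrix : Matrix (Vt N) (Vt N) ℝ →ₗ[ℝ] (Vt N → Vt N → ℝ) where
  toFun P s t := if t = 0 then 0 else P s (s + t)
  map_add' P Q := by ext s t; split_ifs <;> simp [*]
  map_smul' c P := by ext s t; split_ifs <;> simp [*]

theorem ofTrafficMatrix_apply_of_ne_zero (P : Matrix (Vt N) (Vt N) ℝ) (s : Vt N) {t : Vt N}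
    (ht : t ≠ 0) : ofTrafficMatrix P s t = P s (s + t) :=
  if_neg ht

theorem ofTrafficMatrix_trafficMatrix {d : Vt N → Vt N → ℝ} (hd : ∀ s, d s 0 = 0) :
    ofTrafficMatrix (trafficMatrix d) = d := by
  ext s t
  by_cases ht : t = 0
  · simp [ofTrafficMatrix, ht, hd]
  · simp [ofTrafficMatrix_apply_of_ne_zero _ _ ht, trafficMatrix]

variable [NeZero N] {d : Vt N → Vt N → ℝ}

theorem sum_tns_eq_sum {g : Vt N → ℝ} (hg : g 0 = 0) : ∑ t ∈ tns N, g t = ∑ t, g t :=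
  sum_filter_of_ne fun _ _ ht h => ht (h ▸ hg)

theorem sum_trafficMatrix_row (hd : ∀ s, d s 0 = 0) (i : Vt N) :
    ∑ j, trafficMatrix d i j = rowSum N d i := by
  rw [rowSum, sum_tns_eq_sum (hd i)]
  exact Fintype.sum_equiv (Equiv.subRight i) _ _ fun j => rfl

theorem sum_trafficMatrix_col (hd : ∀ s, d s 0 = 0) (j : Vt N) :
    ∑ i, trafficMatrix d i j = colSum N d j := by
  rw [colSum, sum_tns_eq_sum (by simpa using hd j)]
  exact Fintype.sum_equiv (Equiv.subLeft j) _ _ fun i => by simp [trafficMatrix]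

theorem sum_sum_trafficMatrix (hd : ∀ s, d s 0 = 0) :
    ∑ i, ∑ j, trafficMatrix d i j = totalSum N d := by
  simp only [totalSum, sum_trafficMatrix_row hd]

theorem IsTraffic.isSubstochastic_trafficMatrix (hd : IsTraffic N d) :
    (trafficMatrix d).IsSubstochastic :=
  ⟨fun i j => hd.1 i (j - i), fun i => sum_trafficMatrix_row hd.2.1 i ▸ hd.2.2.1 i,
    fun j => sum_trafficMatrix_col hd.2.1 j ▸ hd.2.2.2 j⟩

theorem kSparse_ofTrafficMatrix {k : ℕ} {P : Matrix (Vt N) (Vt N) ℝ}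
    (hP : P ∈ Matrix.sparseSubstochastic ℝ (Vt N) k) : kSparse N k (ofTrafficMatrix P) := by
  obtain ⟨⟨h0, hrow, hcol⟩, hrows, hcols⟩ := hP
  have hsum_le : ∀ g : Vt N → ℝ, (∀ t, 0 ≤ g t) → ∑ t ∈ tns N, g t ≤ ∑ t, g t := fun g hg =>
    sum_le_sum_of_subset_of_nonneg (subset_univ _) fun t _ _ => hg t
  refine ⟨⟨fun s t => ?_, fun s => if_pos rfl, fun s => ?_, fun s => ?_⟩, ?_, ?_⟩
  · by_cases ht : t = 0
    · simp [ofTrafficMatrix, ht]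
    · exact ofTrafficMatrix_apply_of_ne_zero P s ht ▸ h0 _ _
  · calc rowSum N (ofTrafficMatrix P) s = ∑ t ∈ tns N, P s (s + t) :=
          sum_congr rfl fun t ht => ofTrafficMatrix_apply_of_ne_zero P s (mem_filter.1 ht).2
      _ ≤ ∑ t, P s (s + t) := hsum_le _ fun t => h0 _ _
      _ = ∑ j, P s j := Fintype.sum_equiv (Equiv.addLeft s) _ _ fun _ => rfl
      _ ≤ 1 := hrow s
  · calc colSum N (ofTrafficMatrix P) s = ∑ t ∈ tns N, P (s - t) s := sum_congr rfl fun t ht => by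
          rw [ofTrafficMatrix_apply_of_ne_zero _ _ (mem_filter.1 ht).2, sub_add_cancel]
      _ ≤ ∑ t, P (s - t) s := hsum_le _ fun t => h0 _ _
      _ = ∑ i, P i s := Fintype.sum_equiv (Equiv.subLeft s) _ _ fun _ => rfl
      _ ≤ 1 := hcol s
  · refine le_trans (Set.ncard_le_ncard ?_) hrows
    rintro s ⟨t, ht, hst⟩
    exact ⟨s + t, ofTrafficMatrix_apply_of_ne_zero P s ht ▸ hst⟩
  · refine le_trans (Set.ncard_le_ncard ?_) hcols
    rintro s ⟨t, ht, hst⟩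
    exact ⟨s - t, by rwa [ofTrafficMatrix_apply_of_ne_zero _ _ ht, sub_add_cancel] at hst⟩

theorem kSparse.kLimited {k : ℕ} (h : kSparse N k d) : kLimited N k d := by
  classical
  obtain ⟨hd, hrows, -⟩ := h
  set S := {s | ∃ t, t ≠ 0 ∧ d s t ≠ 0}
  have hrowSum : ∀ s ∉ S, rowSum N d s = 0 := fun s hs =>
    sum_eq_zero fun t ht => by_contra fun hst => hs ⟨t, (mem_filter.1 ht).2, hst⟩
  refine ⟨hd, ?_⟩
  calc totalSum N d = ∑ s ∈ S.toFinset, rowSum N d s :=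
        (sum_subset (subset_univ _) fun s _ hs => hrowSum s (by simpa using hs)).symm
    _ ≤ ∑ s ∈ S.toFinset, 1 := sum_le_sum fun s _ => hd.2.2.1 s
    _ ≤ k := by rw [sum_const, nsmul_one, ← Set.ncard_eq_toFinset_card']; exact_mod_cast hrows

theorem convex_kLimited (k : ℕ) : Convex ℝ {d : Vt N → Vt N → ℝ | kLimited N k d} := by
  rintro x ⟨⟨hx0, hxz, hxr, hxc⟩, hxt⟩ y ⟨⟨hy0, hyz, hyr, hyc⟩, hyt⟩ a b ha hb hab
  have hrow : ∀ s, rowSum N (a • x + b • y) s = a * rowSum N x s + b * rowSum N y s := by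
    simp [rowSum, mul_sum, sum_add_distrib]
  have hcol : ∀ s, colSum N (a • x + b • y) s = a * colSum N x s + b * colSum N y s := by
    simp [colSum, mul_sum, sum_add_distrib]
  have htot : totalSum N (a • x + b • y) = a * totalSum N x + b * totalSum N y := by
    simp [totalSum, hrow, mul_sum, sum_add_distrib]
  refine ⟨⟨fun s t => ?_, fun s => by simp [hxz, hyz], fun s => ?_, fun s => ?_⟩, ?_⟩
  · simp only [Pi.add_apply, Pi.smul_apply, smul_eq_mul]
    exact add_nonneg (mul_nonneg ha (hx0 s t)) (mul_nonneg hb (hy0 s t))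
  · rw [hrow]; nlinarith [hxr s, hyr s]
  · rw [hcol]; nlinarith [hxc s, hyc s]
  · rw [htot]; nlinarith

end Torus

/-- The convex hull of the set `D'_k` of `k`-sparse traffic matrices equals the
polytope `D_k` of `k`-limited traffic matrices. -/
theorem stmt19 (N : ℕ) [NeZero N] (k : ℕ) :
    convexHull ℝ {d : Vt N → Vt N → ℝ | kSparse N k d} =
      {d : Vt N → Vt N → ℝ | kLimited N k d} := by
  refine (convexHull_min (fun d => kSparse.kLimited) (convex_kLimited k)).antisymm
    fun d ⟨hd, htot⟩ => ?_
  have hM := Matrix.mem_convexHull_sparseSubstochastic hd.isSubstochastic_trafficMatrix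
    ((sum_sum_trafficMatrix hd.2.1).trans_le htot)
  have hd' := Set.mem_image_of_mem ofTrafficMatrix hM
  rw [LinearMap.image_convexHull, ofTrafficMatrix_trafficMatrix hd.2.1] at hd'
  exact convexHull_mono (Set.image_subset_iff.2 fun P => kSparse_ofTrafficMatrix) hd'
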